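/- arXiv:2103.06155 — 8 statements merged into one kernel-verified Lean document; each statement's English description precedes it below -/
import Mathlib

section
/- A small coproduct of representable natural transformations of presheaves is representable: if (p_i : Y_i → X_i) is an I-indexed family of representable natural transformations over a small category C, then the induced map ∑_i Y_i → ∑_i X_i is representable. -/
open CategoryTheory Limits Opposite

universe u

/-- A natural transformation of presheaves `f : Y ⟶ X` is *representable* if every fibre of `f`
over an element of `X` at a representable presheaf is a pullback of a morphism between
representable presheaves. -/
def RepresentableNatTrans {C : Type u} [SmallCategory C] {X Y : Cᵒᵖ ⥤ Type u} (f : Y ⟶ X) : Prop :=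
  ∀ (A : C) (x : yoneda.obj A ⟶ X), ∃ (B : C) (g : B ⟶ A) (y : yoneda.obj B ⟶ Y),
    IsPullback y (yoneda.map g) f x

/-
Coproducts of presheaves are computed pointwise, and in `Type` a coproduct is a disjoint union.
Hence each inclusion `Y i ⟶ ∐ Y` is the pullback of `X i ⟶ ∐ X` along `Σ p`, and every
`x : yoneda.obj A ⟶ ∐ X` factors through a single summand `X i`. Pasting the pullback square
that witnesses representability of `p i` over that factor with the first square gives the
required square for `Σ p`.
-/

namespace CategoryTheory.Limits

universe v w

lemma Types.isPullback_cofan_inj {I : Type*} {X Y : I → Type v} {c : Cofan Y} {d : Cofan X}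
    (hc : IsColimit c) (hd : IsColimit d) (f : ∀ i, Y i ⟶ X i) (φ : c.pt ⟶ d.pt)
    (hφ : ∀ i, c.inj i ≫ φ = f i ≫ d.inj i) (i : I) :
    IsPullback (c.inj i) (f i) φ (d.inj i) := by
  refine (Types.isPullback_iff _ _ _ _).2 ⟨hφ i, fun y₁ y₂ h ↦
    Cofan.inj_injective_of_isColimit hc i h.1, fun t x hx ↦ ?_⟩
  obtain ⟨j, y, rfl⟩ := Cofan.inj_jointly_surjective_of_isColimit hc t
  have hy : d.inj j (f j y) = d.inj i x := by rw [← hx, ← types_comp_apply _ φ, hφ]; rfl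
  obtain ⟨rfl, rfl⟩ := (Cofan.inj_apply_eq_iff_of_isColimit hd _ _).1 hy
  exact ⟨y, rfl, rfl⟩

section

variable {C : Type*} [Category C] {I : Type w}

noncomputable def isColimitCofanAppSigmaι (Z : I → C ⥤ Type w) (k : C) :
    IsColimit (Cofan.mk ((∐ Z).obj k) fun i ↦ (Sigma.ι Z i).app k) :=
  isColimitCofanMkObjOfIsColimit ((evaluation _ _).obj k) Z _ (coproductIsCoproduct Z)

lemma isPullback_sigmaι_sigmaMap {X Y : I → C ⥤ Type w} (p : ∀ i, Y i ⟶ X i) (i : I) :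
    IsPullback (Sigma.ι Y i) (p i) (Sigma.map p) (Sigma.ι X i) :=
  .of_forall_isPullback_app fun k ↦
    Types.isPullback_cofan_inj (isColimitCofanAppSigmaι Y k) (isColimitCofanAppSigmaι X k)
      (fun i ↦ (p i).app k) ((Sigma.map p).app k)
      (fun i ↦ by simp [← NatTrans.comp_app]) i

end

lemma exists_eq_comp_sigmaι_of_yoneda {C : Type*} [Category.{w} C] {I : Type w}
    {X : I → Cᵒᵖ ⥤ Type w} {A : C} (x : yoneda.obj A ⟶ ∐ X) :
    ∃ (i : I) (x' : yoneda.obj A ⟶ X i), x = x' ≫ Sigma.ι X i := by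
  obtain ⟨i, a, ha⟩ :=
    Cofan.inj_jointly_surjective_of_isColimit (isColimitCofanAppSigmaι X (op A)) (yonedaEquiv x)
  refine ⟨i, yonedaEquiv.symm a, yonedaEquiv.injective ?_⟩
  rw [yonedaEquiv_comp, Equiv.apply_symm_apply, ← ha]
  rfl

end CategoryTheory.Limits

/-- A small coproduct of representable natural transformations of presheaves is representable. -/
theorem RepresentableNatTrans.sigmaMap {C : Type u} [SmallCategory C] {I : Type u}
    {X Y : I → Cᵒᵖ ⥤ Type u} (p : ∀ i, Y i ⟶ X i) (hp : ∀ i, RepresentableNatTrans (p i)) :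
    RepresentableNatTrans (Limits.Sigma.map p) := by
  intro A x
  obtain ⟨i, x', rfl⟩ := exists_eq_comp_sigmaι_of_yoneda x
  obtain ⟨B, g, y, hy⟩ := hp i A x'
  exact ⟨B, g, y ≫ Sigma.ι Y i, hy.paste_horiz (isPullback_sigmaι_sigmaMap p i)⟩
end

section
/- If p is a representable natural transformation between presheaves over a small category C, then the polynomial endofunctor P_p = Σ_X ∘ Π_p ∘ Δ_Y (sending Z to Σ_{A : X} Z^{p⁻¹(A)}) on Psh(C) preserves all colimits. -/
open CategoryTheory Limits Opposite

universe u

/-!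
Evaluated at `c : C`, the polynomial functor is, by Yoneda, `Z ↦ (よc ⟶ (Π_p (Y × Z)).left)`.
Such a map is a point `x : よc ⟶ X` together with a map `Over.mk x ⟶ Π_p (Y × Z)` over `X`, that
is, through the adjunctions `p^* ⊣ Π_p` and `Σ_Y ⊣ Δ_Y`, a map into `Z` from the fibre of `p` over
`x`. That fibre is representable, so the evaluated functor is a coproduct over `x` of functors
`Hom(よB, -)`, each of which preserves colimits since colimits of presheaves are pointwise.
-/

namespace CategoryTheory

universe w w' w'' v u'

namespace Functor

variable {D : Type u'} [Category.{v} D] {ι : Type w} (F : ι → D ⥤ Type w)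

def sigmaTypes : D ⥤ Type w where
  obj d := Σ i, (F i).obj d
  map f := TypeCat.ofHom fun s => ⟨s.1, (F s.1).map f s.2⟩

lemma comp_sigmaTypes {E : Type*} [Category E] (G : E ⥤ D) :
    G ⋙ sigmaTypes F = sigmaTypes fun i => G ⋙ F i :=
  rfl

noncomputable def piCompColimIsoSigmaTypes :
    (pi' F ⋙ (piEquivalenceFunctorDiscrete ι (Type w)).functor) ⋙ colim ≅ sigmaTypes F :=
  NatIso.ofComponents (fun d => Types.coproductIso fun i => (F i).obj d) (by
    intro d d' f
    apply colimit.hom_ext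
    rintro ⟨i⟩
    simp only [comp_map, colim_map, ι_colimMap_assoc]
    -- the diagram is `Discrete.functor _` only up to unfolding
    erw [colimit.isoColimitCocone_ι_hom, colimit.isoColimitCocone_ι_hom_assoc]
    rfl)

instance sigmaTypes_preservesColimitsOfSize [∀ i, PreservesColimitsOfSize.{w', w''} (F i)] :
    PreservesColimitsOfSize.{w', w''} (sigmaTypes F) :=
  have : PreservesColimitsOfSize.{w', w''}
      (pi' F ⋙ (piEquivalenceFunctorDiscrete ι (Type w)).functor) :=
    preservesColimits_of_evaluation _ fun ⟨i⟩ =>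
      preservesColimits_of_natIso (F := F i) (Iso.refl _)
  have : PreservesColimitsOfSize.{w', w''} (colim : (Discrete ι ⥤ Type w) ⥤ Type w) :=
    colimConstAdj.leftAdjoint_preservesColimits
  preservesColimits_of_natIso (piCompColimIsoSigmaTypes F)

end Functor

namespace Over

variable {D : Type u'} [Category.{v} D] {X : D}

def sigmaHomEquiv (T : D) (A : Over X) : (Σ x : T ⟶ X, (Over.mk x ⟶ A)) ≃ (T ⟶ A.left) :=
  (Equiv.sigmaCongrRight fun _ =>
    { toFun u := ⟨u.left, Over.w u⟩
      invFun f := Over.homMk f.1 f.2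
      left_inv _ := rfl
      right_inv _ := rfl }).trans (Equiv.sigmaFiberEquiv (· ≫ A.hom))

def sigmaTypesCoyonedaIso (T : D) :
    Functor.sigmaTypes (fun x : T ⟶ X => coyoneda.obj (op (Over.mk x))) ≅
      Over.forget X ⋙ coyoneda.obj (op T) :=
  NatIso.ofComponents (fun A => (sigmaHomEquiv T A).toIso) fun _ => rfl

end Over

instance Functor.preservesColimits_coyoneda_obj_of_isRepresentable {C : Type u'} [Category.{v} C]
    (W : Cᵒᵖ ⥤ Type v) [W.IsRepresentable] : PreservesColimitsOfSize.{v, v} (coyoneda.obj (op W)) :=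
  -- Mathlib provides `PreservesColimit K (coyoneda.obj (op (yoneda.obj _)))` for every diagram `K`
  have : PreservesColimitsOfSize.{v, v} (coyoneda.obj (op (yoneda.obj W.reprX))) :=
    ⟨⟨inferInstance⟩⟩
  preservesColimits_of_natIso (coyoneda.mapIso W.reprW.op.symm)

end CategoryTheory

lemma RepresentableNatTrans.isRepresentable_pullback {C : Type u} [SmallCategory C]
    {X Y : Cᵒᵖ ⥤ Type u} {p : Y ⟶ X} (hp : RepresentableNatTrans p) {c : C}
    (x : yoneda.obj c ⟶ X) : (pullback x p).IsRepresentable :=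
  have ⟨_, _, _, h⟩ := hp c x
  Functor.IsRepresentable.mk' h.flip.isoPullback

/-- If `p` is a representable natural transformation of presheaves, then the polynomial
endofunctor `P_p = Σ_{X → 1} ∘ Π_p ∘ Δ_{Y → 1}` of the locally cartesian closed category of
presheaves preserves all colimits.  Here `Δ_{Y → 1}` is `Over.star Y` (pullback along `Y ⟶ 1`),
`Π_p : Over Y ⥤ Over X` is any right adjoint of the pullback functor `Over.pullback p`, and
`Σ_{X → 1}` is the forgetful functor `Over X ⥤ Psh(C)`. -/
theorem polynomial_extension_preservesColimits {C : Type u} [SmallCategory C]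
    {X Y : Cᵒᵖ ⥤ Type u} (p : Y ⟶ X) (hp : RepresentableNatTrans p)
    (Pi : Over Y ⥤ Over X) (adj : Over.pullback p ⊣ Pi) :
    Nonempty (PreservesColimits (Over.star Y ⋙ Pi ⋙ Over.forget X)) := by
  refine ⟨preservesColimits_of_evaluation _ fun ⟨c⟩ => ?_⟩
  have hfibre (x : yoneda.obj c ⟶ X) :
      PreservesColimits ((Over.star Y ⋙ Pi) ⋙ coyoneda.obj (op (Over.mk x))) :=
    have := hp.isRepresentable_pullback x
    preservesColimits_of_natIso (F := coyoneda.obj (op (pullback x p)))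
      ((adj.comp (Over.forgetAdjStar Y)).compCoyonedaIso.app (op (Over.mk x)))
  have hsigma : PreservesColimits ((Over.star Y ⋙ Pi) ⋙
      Functor.sigmaTypes fun x : yoneda.obj c ⟶ X => coyoneda.obj (op (Over.mk x))) := by
    rw [Functor.comp_sigmaTypes]
    infer_instance
  exact preservesColimits_of_natIso <|
    Functor.isoWhiskerLeft (Over.star Y ⋙ Pi) (Over.sigmaTypesCoyonedaIso (yoneda.obj c)) ≪≫
      Functor.isoWhiskerLeft (Over.star Y ⋙ Pi ⋙ Over.forget X) (curriedYonedaLemma.app (op c))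
end

section
/- Let C be a small category that is Cauchy complete (all idempotents split) and has finite products, and let p : Y → X be a natural transformation of presheaves over C. If the polynomial endofunctor P_p : Psh(C) → Psh(C) is cocontinuous, then p is representable. -/
/-!
Fix `x : yoneda A ⟶ X` and let `Q = pullback x p` be the fibre of `p` over `x`. The adjunctions
`Over.forget Y ⊣ Over.star Y` and `Over.pullback p ⊣ Π_p` identify `Hom(Q, -)` with
`Hom_{/X}(x, Π_p (Y × -))`. Representable objects of `Psh(C)/X` are tiny, and `Π_p ∘ Δ_Y`
preserves colimits because `P_p` does and `Over.forget X` reflects them, so `Q` is tiny too.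
Writing `Q` as the colimit of its elements, `𝟙 Q` factors through a representable, so `Q` is a
retract of a representable; as idempotents split in `C`, `Q` is itself representable.
-/

open CategoryTheory Limits Opposite

universe u v

namespace CategoryTheory

theorem Functor.essImage_of_retract {C D : Type*} [Category C] [Category D] (F : C ⥤ D)
    [F.Full] [F.Faithful] [IsIdempotentComplete C] {Q : D} {c : C}
    (r : Retract Q (F.obj c)) : F.essImage Q := by
  have idem : F.preimage (r.r ≫ r.i) ≫ F.preimage (r.r ≫ r.i) = F.preimage (r.r ≫ r.i) :=
    F.map_injective (by simp)
  obtain ⟨B, s, t, hst, hts⟩ := IsIdempotentComplete.idempotents_split c _ idem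
  refine ⟨B, ⟨{ hom := F.map s ≫ r.r, inv := r.i ≫ F.map t, hom_inv_id := ?_, inv_hom_id := ?_ }⟩⟩
  · calc (F.map s ≫ r.r) ≫ r.i ≫ F.map t = F.map (s ≫ (t ≫ s) ≫ t) := by simp [hts]
      _ = 𝟙 _ := by simp [hst]
  · calc (r.i ≫ F.map t) ≫ F.map s ≫ r.r = r.i ≫ F.map (t ≫ s) ≫ r.r := by simp
      _ = 𝟙 _ := by simp [hts]

theorem Functor.isRepresentable_of_retract {C : Type*} [Category.{v} C] [IsIdempotentComplete C]
    {Q : Cᵒᵖ ⥤ Type v} {c : C} (r : Retract Q (yoneda.obj c)) : Q.IsRepresentable :=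
  have ⟨_, ⟨e⟩⟩ := yoneda.essImage_of_retract r
  .mk' e

theorem Functor.isRepresentable_of_preservesColimit_coyoneda {C : Type*} [Category.{v} C]
    [IsIdempotentComplete C] (Q : Cᵒᵖ ⥤ Type v)
    [PreservesColimit (CostructuredArrow.proj yoneda Q ⋙ yoneda) (coyoneda.obj (op Q))] :
    Q.IsRepresentable :=
  have ⟨j, s, hs⟩ :=
    exists_hom_of_preservesColimit_coyoneda (Presheaf.isColimitTautologicalCocone Q) (𝟙 Q)
  isRepresentable_of_retract (c := j.left) ⟨s, j.hom, hs⟩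

theorem preservesColimit_coyoneda_overMk {C : Type*} [Category.{v} C] {A : Cᵒᵖ ⥤ Type v}
    {J : Type v} [SmallCategory J] (K : J ⥤ Over A) {c : C} (x : yoneda.obj c ⟶ A) :
    PreservesColimit K (coyoneda.obj (op (Over.mk x))) :=
  preservesColimit_of_natIso K (F := (overEquivPresheafCostructuredArrow A).functor ⋙
      coyoneda.obj (op (yoneda.obj (CostructuredArrow.mk x))))
    ((CostructuredArrow.toOverCompCoyoneda A).app (op (CostructuredArrow.mk x))).symm

theorem Adjunction.preservesColimit_coyoneda_obj {D E J : Type*} [Category.{v} D]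
    [Category.{v} E] [Category J] {L : D ⥤ E} {R : E ⥤ D} (adj : L ⊣ R) (K : J ⥤ E) (U : D)
    [PreservesColimit K R] [PreservesColimit (K ⋙ R) (coyoneda.obj (Opposite.op U))] :
    PreservesColimit K (coyoneda.obj (Opposite.op (L.obj U))) :=
  preservesColimit_of_natIso K (F := R ⋙ coyoneda.obj (Opposite.op U))
    (adj.compCoyonedaIso.app (Opposite.op U)).symm

end CategoryTheory

theorem representableNatTrans_of_isRepresentable_pullback {C : Type u} [SmallCategory C]
    {X Y : Cᵒᵖ ⥤ Type u} (p : Y ⟶ X)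
    (h : ∀ (A : C) (x : yoneda.obj A ⟶ X), (pullback x p).IsRepresentable) :
    RepresentableNatTrans p := by
  intro A x
  let e := (pullback x p).reprW
  refine ⟨_, yoneda.preimage (e.hom ≫ pullback.fst x p), e.hom ≫ pullback.snd x p, ?_⟩
  refine (IsPullback.of_iso_pullback ⟨?_⟩ e (by simp) rfl).flip
  simp [pullback.condition]

theorem representable_of_polynomial_extension_preservesColimits_general {C : Type u} [SmallCategory C]
    [IsIdempotentComplete C]
    {X Y : Cᵒᵖ ⥤ Type u} (p : Y ⟶ X)
    (Pi : Over Y ⥤ Over X) (adj : Over.pullback p ⊣ Pi)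
    (h : PreservesColimits (Over.star Y ⋙ Pi ⋙ Over.forget X)) :
    RepresentableNatTrans p := by
  have : PreservesColimits (Over.star Y ⋙ Pi) :=
    have : PreservesColimits ((Over.star Y ⋙ Pi) ⋙ Over.forget X) := h
    preservesColimits_of_reflects_of_preserves _ (Over.forget X)
  refine representableNatTrans_of_isRepresentable_pullback p fun A x => ?_
  let Q := (Over.pullback p ⋙ Over.forget Y).obj (Over.mk x)
  have := preservesColimit_coyoneda_overMk
    ((CostructuredArrow.proj yoneda Q ⋙ yoneda) ⋙ Over.star Y ⋙ Pi) x
  have := (adj.comp (Over.forgetAdjStar Y)).preservesColimit_coyoneda_obj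
    (CostructuredArrow.proj yoneda Q ⋙ yoneda) (Over.mk x)
  exact Functor.isRepresentable_of_preservesColimit_coyoneda Q

/-- Let `C` be a small Cauchy complete category (all idempotents split) with finite products.
If the polynomial endofunctor `P_p = Σ_{X → 1} ∘ Π_p ∘ Δ_{Y → 1}` of a natural transformation
`p : Y ⟶ X` of presheaves over `C` is cocontinuous, then `p` is representable.  Here
`Π_p : Over Y ⥤ Over X` is any right adjoint of the pullback functor `Over.pullback p`. -/
theorem representable_of_polynomial_extension_preservesColimits {C : Type u} [SmallCategory C]
    [IsIdempotentComplete C] [HasFiniteProducts C]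
    {X Y : Cᵒᵖ ⥤ Type u} (p : Y ⟶ X)
    (Pi : Over Y ⥤ Over X) (adj : Over.pullback p ⊣ Pi)
    (h : PreservesColimits (Over.star Y ⋙ Pi ⋙ Over.forget X)) :
    RepresentableNatTrans p :=
  representable_of_polynomial_extension_preservesColimits_general p Pi adj h
end

section
/- A presheaf X on a small category C is externally tiny (the functor Hom(X, −) : Psh(C) → Set preserves all colimits) if and only if X is a retract of a representable presheaf. -/
/-!
Every presheaf `X` is the colimit of the representables over it. If `Hom(X, -)` preserves this
colimit, then `𝟙 X`, an element of `Hom(X, colim) = Hom(X, X)`, comes from some `Hom(X, y A)`: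
it factors through a coprojection `y A ⟶ X`, which exhibits `X` as a retract of `y A`.
Conversely, by Yoneda `Hom(y A, -)` is evaluation at `A`, which preserves colimits, and a retract
`X` of `y A` makes `Hom(X, -)` a retract of `Hom(y A, -)`; colimit preservation passes to
retracts of functors.
-/

open CategoryTheory Limits Opposite

universe w w' u

namespace CategoryTheory

section

variable {D E : Type*} [Category D] [Category E] {F G : D ⥤ E}

lemma Retract.app_retract (h : Retract G F) (X : D) : h.i.app X ≫ h.r.app X = 𝟙 (G.obj X) :=
  (h.map ((evaluation D E).obj X)).retract

def Retract.isColimitMapCocone (h : Retract G F) {J : Type*} [Category J] {K : J ⥤ D}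
    {c : Cocone K} (hF : IsColimit (F.mapCocone c)) : IsColimit (G.mapCocone c) where
  desc s := h.i.app c.pt ≫ hF.desc ⟨s.pt, Functor.whiskerLeft K h.r ≫ s.ι⟩
  fac s j := by
    have hfac := hF.fac ⟨s.pt, Functor.whiskerLeft K h.r ≫ s.ι⟩ j
    dsimp at hfac ⊢
    rw [h.i.naturality_assoc, hfac, ← Category.assoc, h.app_retract, Category.id_comp]
  uniq s m hm := by
    have key : h.r.app c.pt ≫ m = hF.desc ⟨s.pt, Functor.whiskerLeft K h.r ≫ s.ι⟩ :=
      hF.uniq ⟨s.pt, Functor.whiskerLeft K h.r ≫ s.ι⟩ _ fun j => by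
        dsimp
        rw [h.r.naturality_assoc, ← hm j]
        rfl
    rw [← key, ← Category.assoc, h.app_retract]
    exact (Category.id_comp m).symm

lemma Retract.preservesColimitsOfSize (h : Retract G F) [PreservesColimitsOfSize.{w, w'} F] :
    PreservesColimitsOfSize.{w, w'} G where
  preservesColimitsOfShape :=
    { preservesColimit :=
        { preserves := fun hc => ⟨h.isColimitMapCocone (isColimitOfPreserves F hc)⟩ } }

end

lemma preservesColimits_coyoneda_obj_yoneda {C : Type u} [SmallCategory C] (A : C) :
    PreservesColimits (coyoneda.obj (op (yoneda.obj A))) :=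
  preservesColimits_of_natIso (curriedYonedaLemma.app (op A)).symm

lemma exists_retract_of_isColimit {C : Type*} [Category C] {J : Type*} [Category J]
    {K : J ⥤ C} {c : Cocone K} (hc : IsColimit c) [PreservesColimit K (coyoneda.obj (op c.pt))] :
    ∃ j, Nonempty (Retract c.pt (K.obj j)) := by
  obtain ⟨j, i, hi⟩ :=
    Types.jointly_surjective _ (isColimitOfPreserves (coyoneda.obj (op c.pt)) hc) (𝟙 c.pt)
  exact ⟨j, ⟨i, c.ι.app j, hi⟩⟩

end CategoryTheory

/-- A presheaf `X` on a small category `C` is *externally tiny* if and only if it is a retract of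
a representable presheaf: the functor `Hom(X, -) : Psh(C) ⥤ Type` preserves all colimits iff
there are maps `i : X ⟶ y(A)` and `r : y(A) ⟶ X` with `i ≫ r = 𝟙 X` for some object `A`. -/
theorem externally_tiny_iff_retract_of_representable {C : Type u} [SmallCategory C]
    (X : Cᵒᵖ ⥤ Type u) :
    Nonempty (PreservesColimits (coyoneda.obj (op X))) ↔
      ∃ (A : C) (i : X ⟶ yoneda.obj A) (r : yoneda.obj A ⟶ X), i ≫ r = 𝟙 X := by
  constructor
  · rintro ⟨_⟩
    have : PreservesColimit (Presheaf.functorToRepresentables X)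
        (coyoneda.obj (op (Presheaf.coconeOfRepresentable X).pt)) :=
      inferInstanceAs (PreservesColimit _ (coyoneda.obj (op X)))
    obtain ⟨j, ⟨h⟩⟩ := exists_retract_of_isColimit (Presheaf.colimitOfRepresentable X)
    let h' := h.trans (uliftYonedaIsoYoneda.app _).retract
    exact ⟨_, h'.i, h'.r, h'.retract⟩
  · rintro ⟨A, i, r, hir⟩
    have := preservesColimits_coyoneda_obj_yoneda A
    exact ⟨(Retract.mk i r hir).op.map coyoneda |>.preservesColimitsOfSize⟩
end

section
/- In a locally cartesian closed category E, the Beck–Chevalley condition holds: for a pullback square with f : B → A, v : B → D, g : D → C, u : A → C (v, u the horizontal maps, f, g the vertical maps), there are natural isomorphisms Δ_g ∘ Σ_u ≅ Σ_v ∘ Δ_f and Δ_g ∘ Π_u ≅ Π_v ∘ Δ_f between functors E/A → E/D. -/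
/-!
Pulling `X ⟶ A` back along `f` and pasting the result onto the given square yields a pullback
of `X ⟶ A ⟶ C` along `g`; this identifies `Δ_g Σ_u X` with `Σ_v Δ_f X`, naturally in `X`.
Since `Σ ⊣ Δ ⊣ Π`, the composites `Δ_g ∘ Π_u` and `Π_v ∘ Δ_f` are right adjoint to
`Σ_g ∘ Δ_u` and `Δ_v ∘ Σ_f`, which are isomorphic by the first part applied to the transposed
square; right adjoints of isomorphic functors are isomorphic.
-/

open CategoryTheory Limits Opposite

universe v u

namespace CategoryTheory

variable {E : Type u} [Category.{v} E] [HasPullbacks E]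
  {A B C D : E} {f : B ⟶ A} {v : B ⟶ D} {g : D ⟶ C} {u : A ⟶ C}

-- Phrased with `(Over.map u).obj X` rather than `X.hom ≫ u` so that `isoPullback` lands
-- syntactically in the object produced by `Over.pullback g`, which the `simp` lemmas below need.
theorem IsPullback.of_hasPullback_paste_vert (sq : IsPullback v f g u) (X : Over A) :
    IsPullback (pullback.fst X.hom f) (pullback.snd X.hom f ≫ v) ((Over.map u).obj X).hom g :=
  (IsPullback.of_hasPullback X.hom f).paste_vert sq.flip

noncomputable def Over.pullbackMapIsoOfIsPullback (sq : IsPullback v f g u) :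
    Over.pullback f ⋙ Over.map v ≅ Over.map u ⋙ Over.pullback g :=
  NatIso.ofComponents (fun X => Over.isoMk (sq.of_hasPullback_paste_vert X).isoPullback)
    fun k => by
      ext
      apply pullback.hom_ext <;>
        simp only [Functor.comp_map, Over.comp_left, Over.pullback_map_left, Over.isoMk_hom_left,
          Over.map_map_left, Category.assoc, pullback.lift_fst, pullback.lift_snd,
          pullback.lift_snd_assoc, IsPullback.isoPullback_hom_fst, IsPullback.isoPullback_hom_snd,
          IsPullback.isoPullback_hom_fst_assoc]

end CategoryTheory

/-- The Beck–Chevalley condition in a locally cartesian closed category: for a pullback square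
with horizontal maps `v : B ⟶ D`, `u : A ⟶ C` and vertical maps `f : B ⟶ A`, `g : D ⟶ C`,
there are natural isomorphisms `Δ_g ∘ Σ_u ≅ Σ_v ∘ Δ_f` and `Δ_g ∘ Π_u ≅ Π_v ∘ Δ_f` between
functors `E/A ⥤ E/D`.  Here `Σ` is postcomposition (`Over.map`), `Δ` is pullback
(`Over.pullback`), and `Π_u`, `Π_v` are the dependent products, i.e. the right adjoints of the
corresponding pullback functors. -/
theorem beck_chevalley {E : Type u} [Category.{v} E] [HasPullbacks E]
    {A B C D : E} (f : B ⟶ A) (v : B ⟶ D) (g : D ⟶ C) (u : A ⟶ C)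
    (sq : IsPullback v f g u)
    (Piu : Over A ⥤ Over C) (adju : Over.pullback u ⊣ Piu)
    (Piv : Over B ⥤ Over D) (adjv : Over.pullback v ⊣ Piv) :
    Nonempty ((Over.map u ⋙ Over.pullback g) ≅ (Over.pullback f ⋙ Over.map v)) ∧
    Nonempty ((Piu ⋙ Over.pullback g) ≅ (Over.pullback f ⋙ Piv)) :=
  ⟨⟨(Over.pullbackMapIsoOfIsPullback sq).symm⟩,
    ⟨conjugateIsoEquiv ((Over.mapPullbackAdj g).comp adju) (adjv.comp (Over.mapPullbackAdj f))
      (Over.pullbackMapIsoOfIsPullback sq.flip)⟩⟩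
end

section
/- In a locally cartesian closed category, the distributivity law holds: given morphisms u : C → B and f : B → A, setting v = Π_f(u) : D → A, w = Δ_f(v) (the pullback of v along f, with projections q : P → D and e : P → C the counit component of Δ_f ⊣ Π_f applied appropriately), there is a natural isomorphism Π_f ∘ Σ_u ≅ Σ_v ∘ Π_q ∘ Δ_e of functors E/C → E/A. -/
/-!
Write `U` for `u` as an object of `E/B`, so that `V := Π_f U` is `v`. Under `E/C ≌ (E/B)/U` and
`E/D ≌ (E/A)/V`, the functor `Σ_u` is the forgetful functor of `(E/B)/U`, hence
`Π_f ∘ Σ_u ≅ Σ_v ∘ Π'` where `Π' : E/C ⥤ E/D` is the functor `Π_f` induces on these slices.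
Since `Δ_f ⊣ Π_f`, `Π'` is right adjoint to `Δ_f` on slices followed by composition with the
counit at `U`; by pullback pasting that left adjoint is `Σ_e ∘ Δ_q`, whose right adjoint is
`Π_q ∘ Δ_e`.
-/

open CategoryTheory Limits

universe v u

namespace CategoryTheory

variable {T : Type u} [Category.{v} T]

def Over.iteratedSliceForwardMapIsoForget {X : T} (f : Over X) :
    f.iteratedSliceForward ⋙ Over.map f.hom ≅ Over.forget f :=
  NatIso.ofComponents
    (fun g => Over.isoMk (Iso.refl _) ((Category.id_comp _).trans (Over.w g.hom).symm))
    (fun _ => by ext; exact (Category.comp_id _).trans (Category.id_comp _).symm)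

def Adjunction.iteratedSlice {X Y : T} {F : Over X ⥤ Over Y} {G : Over Y ⥤ Over X}
    (adj : F ⊣ G) (U : Over Y) :
    (G.obj U).iteratedSliceBackward ⋙ Over.post F ⋙ Over.map (adj.counit.app U) ⋙
        U.iteratedSliceForward ⊣
      U.iteratedSliceBackward ⋙ Over.post G ⋙ (G.obj U).iteratedSliceForward :=
  (G.obj U).iteratedSliceEquiv.symm.toAdjunction.comp
    ((Over.postAdjunctionRight adj).comp U.iteratedSliceEquiv.toAdjunction)

/-- Both sides are right adjoint to `Over.map (pullback.fst g.hom f)`. -/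
noncomputable def Over.iteratedSlicePostPullbackIso [HasPullbacks T] {X Y : T} (f : Y ⟶ X)
    (g : Over X) :
    g.iteratedSliceBackward ⋙ Over.post (Over.pullback f) ⋙
        ((Over.pullback f).obj g).iteratedSliceForward ≅
      Over.pullback (pullback.fst g.hom f) :=
  conjugateIsoEquiv ((Over.mapPullbackAdj f).iteratedSlice g) (Over.mapPullbackAdj _) <|
    NatIso.ofComponents
      (fun Z => Over.isoMk (Iso.refl _) (by
        show 𝟙 _ ≫ Z.hom ≫ ((Over.mapPullbackAdj f).counit.app g).left = _
        simp))
      (fun _ => by ext; exact (Category.comp_id _).trans (Category.id_comp _).symm)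

end CategoryTheory

/-- The distributivity law in a locally cartesian closed category: given `u : C ⟶ B` and
`f : B ⟶ A`, let `v : D ⟶ A` be the dependent product `Π_f(u)` (where `Π_f` is a right adjoint
of `Over.pullback f`), let `P` be the pullback of `v` along `f`, with first projection
`q : P ⟶ D`, and let `e : P ⟶ C` be the component at `u` of the counit of `Δ_f ⊣ Π_f`.
Then there is a natural isomorphism `Π_f ∘ Σ_u ≅ Σ_v ∘ Π_q ∘ Δ_e` of functors `E/C ⥤ E/A`,
where `Π_q` is any right adjoint of `Over.pullback q`. -/
theorem distributivity {E : Type u} [Category.{v} E] [HasFiniteLimits E]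
    {A B C : E} (u : C ⟶ B) (f : B ⟶ A)
    (Pif : Over B ⥤ Over A) (adjf : Over.pullback f ⊣ Pif)
    (Piq : Over (pullback (Pif.obj (Over.mk u)).hom f) ⥤ Over (Pif.obj (Over.mk u)).left)
    (adjq : Over.pullback (pullback.fst (Pif.obj (Over.mk u)).hom f) ⊣ Piq) :
    Nonempty ((Over.map u ⋙ Pif) ≅
      (Over.pullback ((adjf.counit.app (Over.mk u)).left) ⋙ Piq ⋙
        Over.map (Pif.obj (Over.mk u)).hom)) := by
  let U := Over.mk u
  let V := Pif.obj U
  let slicePif := U.iteratedSliceBackward ⋙ Over.post Pif ⋙ V.iteratedSliceForward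
  have sigmaComp : Over.map u ⋙ Pif ≅ slicePif ⋙ Over.map V.hom :=
    Functor.isoWhiskerLeft (U.iteratedSliceBackward ⋙ Over.post Pif)
      (Over.iteratedSliceForwardMapIsoForget V).symm
  have leftAdjoints : Over.pullback (pullback.fst V.hom f) ⋙ Over.map (adjf.counit.app U).left ≅
      V.iteratedSliceBackward ⋙ Over.post (Over.pullback f) ⋙ Over.map (adjf.counit.app U) ⋙
        U.iteratedSliceForward :=
    Functor.isoWhiskerRight (Over.iteratedSlicePostPullbackIso f V).symm _
  have rightAdjoints : slicePif ≅ Over.pullback (adjf.counit.app U).left ⋙ Piq :=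
    conjugateIsoEquiv (adjf.iteratedSlice U) (adjq.comp (Over.mapPullbackAdj _)) leftAdjoints
  exact ⟨sigmaComp ≪≫ Functor.isoWhiskerRight rightAdjoints _⟩
end

section
/- Let f : B → A be a morphism in a locally cartesian closed category E. Morphisms g : Y → P_f(X) (where P_f(X) = Σ_{a∈A} X^{B_a}) correspond naturally in X and Y to pairs (g₁, g₂) where g₁ : Y → A and g₂ : Δ_{g₁}(B) → X, with Δ_{g₁}(B) the pullback of f along g₁. -/
open CategoryTheory Limits

universe v u

/-!
A morphism `Y ⟶ P_f X` is a morphism `g₁ : Y ⟶ A` together with a morphism over `A` from `g₁`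
to `Π_f (B × X)`. Since `P_f` is the underlying object of the right adjoint `Π_f ∘ B^*` of
`Σ_B ∘ Δ_f`, the latter corresponds to a morphism `Σ_B Δ_f g₁ = Δ_{g₁}(B) ⟶ X`, and both
naturality squares are naturality squares of adjunction hom-equivalences.
-/

namespace CategoryTheory

variable {C : Type*} [Category C] {A : C}

def Over.homEquivSigma (P : Over A) (Y : C) :
    (Y ⟶ P.left) ≃ Σ g₁ : Y ⟶ A, (Over.mk g₁ ⟶ P) :=
  (Equiv.sigmaFiberEquiv fun g : Y ⟶ P.left => g ≫ P.hom).symm.trans <|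
    Equiv.sigmaCongrRight fun _ =>
      { toFun := fun g => Over.homMk g.1 g.2
        invFun := fun u => ⟨u.left, Over.w u⟩
        left_inv := fun _ => rfl
        right_inv := fun _ => by ext; rfl }

theorem Over.pullback_map_homMk_left [HasPullbacks C] {B Y Y' : C} (f : B ⟶ A) (g : Y ⟶ A)
    (m : Y' ⟶ Y) :
    ((Over.pullback f).map (Over.homMk m rfl : Over.mk (m ≫ g) ⟶ Over.mk g)).left =
      pullback.map (m ≫ g) f g f m (𝟙 B) (𝟙 A) (by simp) (by simp) := by
  apply pullback.hom_ext <;> simp [Over.pullback, pullback.map]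

namespace Adjunction

variable {D : Type*} [Category D] {L : Over A ⥤ D} {R : D ⥤ Over A} (adj : L ⊣ R)

def overHomEquiv (X : D) (Y : C) :
    (Y ⟶ (R.obj X).left) ≃ Σ g₁ : Y ⟶ A, (L.obj (Over.mk g₁) ⟶ X) :=
  (Over.homEquivSigma (R.obj X) Y).trans <|
    Equiv.sigmaCongrRight fun _ => (adj.homEquiv _ _).symm

theorem overHomEquiv_symm_apply (X : D) (Y : C) (p : Σ g₁ : Y ⟶ A, (L.obj (Over.mk g₁) ⟶ X)) :
    (adj.overHomEquiv X Y).symm p = (adj.homEquiv _ _ p.2).left :=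
  rfl

theorem overHomEquiv_naturality_right {X X' : D} (k : X ⟶ X') {Y : C}
    (g : Y ⟶ (R.obj X).left) :
    adj.overHomEquiv X' Y (g ≫ (R.map k).left) =
      ⟨(adj.overHomEquiv X Y g).1, (adj.overHomEquiv X Y g).2 ≫ k⟩ := by
  rw [← Equiv.eq_symm_apply, overHomEquiv_symm_apply, homEquiv_naturality_right, Over.comp_left]
  exact congrArg (· ≫ _) ((adj.overHomEquiv X Y).symm_apply_apply g).symm

theorem overHomEquiv_naturality_left {X : D} {Y Y' : C} (m : Y' ⟶ Y)
    (g : Y ⟶ (R.obj X).left) :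
    adj.overHomEquiv X Y' (m ≫ g) =
      ⟨m ≫ (adj.overHomEquiv X Y g).1,
        L.map (Over.homMk m rfl :
            Over.mk (m ≫ (adj.overHomEquiv X Y g).1) ⟶ Over.mk (adj.overHomEquiv X Y g).1) ≫
          (adj.overHomEquiv X Y g).2⟩ := by
  rw [← Equiv.eq_symm_apply, overHomEquiv_symm_apply, homEquiv_naturality_left, Over.comp_left]
  exact congrArg (m ≫ ·) ((adj.overHomEquiv X Y).symm_apply_apply g).symm

end Adjunction

end CategoryTheory

/-- For a morphism `f : B ⟶ A` in a locally cartesian closed category `E`, with polynomial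
extension `P_f = Σ_{A→1} ∘ Π_f ∘ Δ_{B→1} : E ⥤ E` (where `Π_f` is any right adjoint of
`Over.pullback f`), morphisms `g : Y ⟶ P_f(X)` correspond, naturally in `X` and `Y`, to pairs
`(g₁, g₂)` where `g₁ : Y ⟶ A` and `g₂ : Δ_{g₁}(B) ⟶ X`, with `Δ_{g₁}(B)` the pullback of `f`
along `g₁`. -/
theorem polynomial_hom_equiv {E : Type u} [Category.{v} E] [HasFiniteLimits E]
    {A B : E} (f : B ⟶ A) (Pif : Over B ⥤ Over A) (adj : Over.pullback f ⊣ Pif) :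
    ∃ e : ∀ (X Y : E), (Y ⟶ (Over.star B ⋙ Pif ⋙ Over.forget A).obj X) ≃
        (Σ g₁ : Y ⟶ A, (pullback g₁ f ⟶ X)),
      (∀ (X X' Y : E) (k : X ⟶ X') (g : Y ⟶ (Over.star B ⋙ Pif ⋙ Over.forget A).obj X),
        e X' Y (g ≫ (Over.star B ⋙ Pif ⋙ Over.forget A).map k) =
          ⟨(e X Y g).1, (e X Y g).2 ≫ k⟩) ∧
      (∀ (X Y Y' : E) (m : Y' ⟶ Y) (g : Y ⟶ (Over.star B ⋙ Pif ⋙ Over.forget A).obj X),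
        e X Y' (m ≫ g) = ⟨m ≫ (e X Y g).1,
          pullback.map (m ≫ (e X Y g).1) f ((e X Y g).1) f m (𝟙 B) (𝟙 A)
            (by simp) (by simp) ≫ (e X Y g).2⟩) := by
  let adjP := adj.comp (Over.forgetAdjStar B)
  refine ⟨adjP.overHomEquiv, fun X X' Y k g => adjP.overHomEquiv_naturality_right k g,
    fun X Y Y' m g => (adjP.overHomEquiv_naturality_left m g).trans ?_⟩
  rw [← Over.pullback_map_homMk_left]
  rfl
end

section
/- Let C = (Fin/I)^op, the opposite of the category of finite sets over a fixed set I, with Ty the constant presheaf with value I, Tm the domain presheaf (A,u) ↦ A, and p : Tm → Ty given componentwise by u : A → I. Then p is a representable natural transformation: for each (A,u) and each j ∈ I, the map y(A+1, [u,j]) → y(A,u) induced by the coprojection A → A+1, together with the element ⋆ ∈ A+1, exhibits a pullback of p along j : y(A,u) → Ty. -/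
open CategoryTheory Limits Opposite

universe u

/-- The category `Fin/I` of finite sets over a fixed set `I`. -/
abbrev FinOver (I : Type u) : Type (u + 1) :=
  ObjectProperty.FullSubcategory (fun X : Over I => Finite X.left)

variable (I : Type u)

/-- The presheaf of types on `(Fin/I)ᵒᵖ`: the constant presheaf with value `I`. -/
def finTy : ((FinOver I)ᵒᵖ)ᵒᵖ ⥤ Type u :=
  (Functor.const _).obj I

/-- The presheaf of terms on `(Fin/I)ᵒᵖ`: the domain presheaf `(A, u) ↦ A`. -/
def finTm : ((FinOver I)ᵒᵖ)ᵒᵖ ⥤ Type u where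
  obj X := X.unop.unop.obj.left
  map φ := TypeCat.ofHom (fun a => (φ.unop.unop).hom.left a)

/-- The typing natural transformation, given componentwise by `u : A → I`. -/
def finP : finTm I ⟶ finTy I where
  app X := TypeCat.ofHom (fun a => X.unop.unop.obj.hom a)
  naturality X Y φ := by
    ext a
    exact ConcreteCategory.congr_hom (Over.w φ.unop.unop.hom) a

/-- The context extension of `(A, u)` by `j ∈ I`: the finite set `A ⊕ ⋆` over `I` via
`[u, j]`. -/
def finExt (X : FinOver I) (j : I) : FinOver I :=
  ⟨Over.mk (TypeCat.ofHom (Sum.elim X.obj.hom (fun _ : PUnit.{u + 1} => j) : X.obj.left ⊕ PUnit.{u + 1} → I)),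
    show Finite (X.obj.left ⊕ PUnit.{u + 1}) by have := X.property; exact inferInstance⟩

/-- The projection `(A ⊕ ⋆, [u,j]) ⟶ (A, u)` in `(Fin/I)ᵒᵖ`, induced by the left coprojection
`A → A ⊕ ⋆`. -/
def finDisp (X : FinOver I) (j : I) : op (finExt I X j) ⟶ (op X : (FinOver I)ᵒᵖ) :=
  (InducedCategory.homMk (Over.homMk (TypeCat.ofHom (Sum.inl : X.obj.left → X.obj.left ⊕ PUnit.{u + 1})) rfl) :
    X ⟶ finExt I X j).op

/-- The new variable: the added element `⋆ ∈ A ⊕ ⋆`. -/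
def finVar (X : FinOver I) (j : I) : (finTm I).obj (op (op (finExt I X j))) :=
  Sum.inr PUnit.unit

/-! Pullbacks of presheaves are computed pointwise. At a stage `Z`, a point of the pullback of `p`
along `j` is a map `h : X ⟶ Z` over `I` together with an element `z ∈ Z` lying over `j`, and such
pairs are exactly the maps `(A + 1, [u, j]) ⟶ Z` over `I`, by the universal property of `A + 1`. -/

section

variable {I} {X Z : FinOver I} {j : I}

lemma finExt_hom_var (f : finExt I X j ⟶ Z) : Z.obj.hom (f.hom.left (finVar I X j)) = j :=
  ConcreteCategory.congr_hom (Over.w f.hom) (finVar I X j)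

lemma finExt_hom_ext {f g : finExt I X j ⟶ Z}
    (hdisp : (finDisp I X j).unop ≫ f = (finDisp I X j).unop ≫ g)
    (hvar : f.hom.left (finVar I X j) = g.hom.left (finVar I X j)) : f = g := by
  ext (a | ⟨⟩)
  · exact ConcreteCategory.congr_hom (congrArg (fun k : X ⟶ Z => k.hom.left) hdisp) a
  · exact hvar

def finExtLift (h : X ⟶ Z) (z : Z.obj.left) (hz : Z.obj.hom z = j) : finExt I X j ⟶ Z :=
  InducedCategory.homMk (Over.homMk (TypeCat.ofHom (Sum.elim h.hom.left fun _ => z)) (by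
    ext (a | ⟨⟩)
    · exact ConcreteCategory.congr_hom (Over.w h.hom) a
    · exact hz))

lemma finDisp_unop_comp_finExtLift (h : X ⟶ Z) (z : Z.obj.left) (hz : Z.obj.hom z = j) :
    (finDisp I X j).unop ≫ finExtLift h z hz = h :=
  rfl

lemma finExtLift_var (h : X ⟶ Z) (z : Z.obj.left) (hz : Z.obj.hom z = j) :
    (finExtLift h z hz).hom.left (finVar I X j) = z :=
  rfl

end

/-- Let `C = (Fin/I)ᵒᵖ`, with `Ty` the constant presheaf `I`, `Tm` the domain presheaf and
`p : Tm ⟶ Ty` given componentwise by `u : A → I`.  Then `p` is a representable natural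
transformation: for each `(A, u)` and each `j ∈ I`, the morphism
`y(A+1, [u,j]) ⟶ y(A, u)` induced by the coprojection `A → A+1`, together with the element
`⋆ ∈ A+1`, exhibits a pullback of `p` along `j : y(A, u) ⟶ Ty`. -/
theorem finP_representable (X : FinOver I) (j : I) :
    IsPullback (yonedaEquiv.symm (finVar I X j)) (yoneda.map (finDisp I X j)) (finP I)
      (yonedaEquiv.symm (j : (finTy I).obj (op (op X : ((FinOver I)ᵒᵖ))))) := by
  refine .of_forall_isPullback_app fun ⟨⟨Z⟩⟩ => (Types.isPullback_iff _ _ _ _).2 ⟨?_, ?_, ?_⟩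
  · ext f
    exact finExt_hom_var f.unop
  · rintro f g ⟨hvar, hdisp⟩
    exact Quiver.Hom.unop_inj (finExt_hom_ext (congrArg Quiver.Hom.unop hdisp) hvar)
  · intro z h hz
    exact ⟨(finExtLift h.unop z hz).op, finExtLift_var h.unop z hz,
      congrArg Quiver.Hom.op (finDisp_unop_comp_finExtLift h.unop z hz)⟩
end
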